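/- arXiv:2502.12678 — 2 statements merged into one kernel-verified Lean document; each statement's English description precedes it below -/
import Mathlib

section
/- Let $R \in \mathbb{R}^{n \times n}$ satisfy $R(i,j) = 1 - R(j,i)$ for all $i,j$, and let $\mathcal{F} \subseteq \Delta_n$ be a closed convex subset of the probability simplex. Fix a Bregman divergence $\mathbb{D}$ and $\beta > 0$. Define two sequences by $\phi^{t+1} = \arg\max_{\phi \in \mathcal{F}} \beta \langle \phi, R(2\psi^t - \psi^{t-1})\rangle - \mathbb{D}(\phi, \phi^t)$ and $\psi^{t+1} = \arg\min_{\psi \in \mathcal{F}} \beta \langle \psi, R^T(2\phi^t - \phi^{t-1})\rangle + \mathbb{D}(\psi, \psi^t)$, initialized with $\phi^0 = \phi^{-1} = \psi^0 = \psi^{-1}$. Then $\phi^t = \psi^t$ for all $t \ge 0$. -/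
open Finset

lemma key_sum {n : ℕ} (R : Fin n → Fin n → ℝ)
    (hanti : ∀ i j, R i j = 1 - R j i)
    (p v : Fin n → ℝ) (hp : ∑ i, p i = 1) :
    ∑ i, p i * (∑ j, R i j * v j) = (∑ j, v j) - ∑ j, p j * (∑ i, R i j * v i) := by
  have h1 : ∑ i, p i * (∑ j, R i j * v j) = ∑ i, ∑ j, (p i * v j - p i * (R j i * v j)) := by
    refine Finset.sum_congr rfl fun i _ => ?_
    rw [Finset.mul_sum]
    refine Finset.sum_congr rfl fun j _ => ?_
    rw [hanti i j]; ring
  have h2 : ∑ j, p j * (∑ i, R i j * v i) = ∑ i, ∑ j, p i * (R j i * v j) := by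
    simp only [Finset.mul_sum]
  rw [h1, h2]
  simp only [Finset.sum_sub_distrib]
  rw [← Finset.sum_mul_sum, hp, one_mul]

theorem stmt5 {n : ℕ} (R : Fin n → Fin n → ℝ)
    (hanti : ∀ i j, R i j = 1 - R j i)
    (F : Set (Fin n → ℝ)) (hFsub : F ⊆ stdSimplex ℝ (Fin n))
    (hFclosed : IsClosed F) (hFconv : Convex ℝ F)
    (D : (Fin n → ℝ) → (Fin n → ℝ) → ℝ) (β : ℝ) (hβ : 0 < β)
    (φ ψ : ℕ → (Fin n → ℝ))
    -- initialization: φ⁰ = ψ⁰ (also serving as φ⁻¹ = ψ⁻¹ via truncated subtraction)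
    (hinit : φ 0 = ψ 0)
    -- φ^{t+1} is the unique maximizer over F of
    --   β ⟨φ', R (2 ψ^t - ψ^{t-1})⟩ - D(φ', φ^t)
    (hφ : ∀ t : ℕ, φ (t + 1) ∈ F ∧
      (∀ p ∈ F,
        β * (∑ i, p i * (∑ j, R i j * (2 * ψ t j - ψ (t - 1) j))) - D p (φ t) ≤
        β * (∑ i, φ (t + 1) i * (∑ j, R i j * (2 * ψ t j - ψ (t - 1) j))) -
          D (φ (t + 1)) (φ t)) ∧
      (∀ p ∈ F,
        β * (∑ i, p i * (∑ j, R i j * (2 * ψ t j - ψ (t - 1) j))) - D p (φ t) =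
        β * (∑ i, φ (t + 1) i * (∑ j, R i j * (2 * ψ t j - ψ (t - 1) j))) -
          D (φ (t + 1)) (φ t) → p = φ (t + 1)))
    -- ψ^{t+1} is the unique minimizer over F of
    --   β ⟨ψ', Rᵀ (2 φ^t - φ^{t-1})⟩ + D(ψ', ψ^t)
    (hψ : ∀ t : ℕ, ψ (t + 1) ∈ F ∧
      (∀ q ∈ F,
        β * (∑ j, ψ (t + 1) j * (∑ i, R i j * (2 * φ t i - φ (t - 1) i))) +
          D (ψ (t + 1)) (ψ t) ≤
        β * (∑ j, q j * (∑ i, R i j * (2 * φ t i - φ (t - 1) i))) + D q (ψ t)) ∧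
      (∀ q ∈ F,
        β * (∑ j, q j * (∑ i, R i j * (2 * φ t i - φ (t - 1) i))) + D q (ψ t) =
        β * (∑ j, ψ (t + 1) j * (∑ i, R i j * (2 * φ t i - φ (t - 1) i))) +
          D (ψ (t + 1)) (ψ t) → q = ψ (t + 1))) :
    ∀ t : ℕ, φ t = ψ t := by
  have sumF : ∀ p ∈ F, ∑ i, p i = 1 := fun p hp => (hFsub hp).2
  have step : ∀ t : ℕ, φ t = ψ t → φ (t - 1) = ψ (t - 1) → φ (t + 1) = ψ (t + 1) := by
    intro t h1 h2
    obtain ⟨hφF, hφmax, hφuniq⟩ := hφ t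
    obtain ⟨hψF, hψmin, hψuniq⟩ := hψ t
    simp only [h1, h2] at hψmin
    have keyψ : β * (∑ i, ψ (t + 1) i * (∑ j, R i j * (2 * ψ t j - ψ (t - 1) j))) -
          D (ψ (t + 1)) (ψ t)
        = β * (∑ j, (2 * ψ t j - ψ (t - 1) j)) -
          (β * (∑ j, ψ (t + 1) j * (∑ i, R i j * (2 * ψ t i - ψ (t - 1) i))) +
            D (ψ (t + 1)) (ψ t)) := by
      have hs : ∑ i, ψ (t + 1) i * (∑ j, R i j * (2 * ψ t j - ψ (t - 1) j))
          = (∑ j, (2 * ψ t j - ψ (t - 1) j)) -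
            ∑ j, ψ (t + 1) j * (∑ i, R i j * (2 * ψ t i - ψ (t - 1) i)) :=
        key_sum R hanti (ψ (t + 1)) (fun j => 2 * ψ t j - ψ (t - 1) j) (sumF _ hψF)
      rw [hs]; ring
    have keyφ : β * (∑ i, φ (t + 1) i * (∑ j, R i j * (2 * ψ t j - ψ (t - 1) j))) -
          D (φ (t + 1)) (ψ t)
        = β * (∑ j, (2 * ψ t j - ψ (t - 1) j)) -
          (β * (∑ j, φ (t + 1) j * (∑ i, R i j * (2 * ψ t i - ψ (t - 1) i))) +
            D (φ (t + 1)) (ψ t)) := by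
      have hs : ∑ i, φ (t + 1) i * (∑ j, R i j * (2 * ψ t j - ψ (t - 1) j))
          = (∑ j, (2 * ψ t j - ψ (t - 1) j)) -
            ∑ j, φ (t + 1) j * (∑ i, R i j * (2 * ψ t i - ψ (t - 1) i)) :=
        key_sum R hanti (φ (t + 1)) (fun j => 2 * ψ t j - ψ (t - 1) j) (sumF _ hφF)
      rw [hs]; ring
    have hA := hφmax (ψ (t + 1)) hψF
    have hB := hψmin (φ (t + 1)) hφF
    rw [h1] at hA
    refine (hφuniq (ψ (t + 1)) hψF ?_).symm
    rw [h1]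
    linarith [keyψ, keyφ, hA, hB]
  have main : ∀ t : ℕ, φ t = ψ t ∧ φ (t + 1) = ψ (t + 1) := by
    intro t
    induction t with
    | zero => exact ⟨hinit, step 0 hinit hinit⟩
    | succ k ih => exact ⟨ih.2, step (k + 1) ih.2 ih.1⟩
  exact fun t => (main t).1
end

section
/- Value difference lemma for two-player Markov games with independent dynamics: for a finite-horizon two-player Markov game with horizon $H$, reward $r(s,a,s',a')$, initial distribution $\nu_1$, and policies $\pi, \pi', \bar\pi$, it holds that $\mathbb{E}_{S_1\sim\nu_1}[V^{\pi,\bar\pi}(S_1,S_1) - V^{\pi',\bar\pi}(S_1,S_1)] = \mathbb{E}_{S_1\sim\nu_1}\sum_{h=1}^H \mathbb{E}_{S \sim d_h^\pi|S_1}\big[\big\langle \mathbb{E}_{(S',A')\sim d_h^{\bar\pi}|S_1} Q_h^{\pi',\bar\pi}(S,\cdot,S',A'),\; \pi_h(\cdot|S) - \pi'_h(\cdot|S)\big\rangle\big]$. -/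
open Finset

/-- Stage-`h` occupancy measure (0-indexed stages) of a nonstationary policy `p`. -/
noncomputable def occ {S A : Type*} [Fintype S] [Fintype A]
    (f : S → A → S → ℝ) (ν : S → ℝ) (p : ℕ → S → A → ℝ) : ℕ → S → A → ℝ
  | 0 => fun s a => ν s * p 0 s a
  | h + 1 => fun s a => (∑ s', ∑ a', occ f ν p h s' a' * f s' a' s) * p (h + 1) s a

/-- Auxiliary backward recursion: pairwise value function with `k` steps to go
in a horizon-`H` two-player Markov game with independent dynamics. -/
noncomputable def Wp {S A : Type*} [Fintype S] [Fintype A]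
    (f : S → A → S → ℝ) (r : S → A → S → A → ℝ)
    (p q : ℕ → S → A → ℝ) (H : ℕ) : ℕ → S → S → ℝ
  | 0 => fun _ _ => 0
  | k + 1 => fun s s' =>
      ∑ a, ∑ a', p (H - (k + 1)) s a * q (H - (k + 1)) s' a' *
        (r s a s' a' +
          ∑ t, ∑ t', f s a t * f s' a' t' * Wp f r p q H k t t')

/-- Pairwise state value function `V_h^{p,q}` (0-indexed stages, horizon `H`). -/
noncomputable def Vp {S A : Type*} [Fintype S] [Fintype A]
    (f : S → A → S → ℝ) (r : S → A → S → A → ℝ)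
    (p q : ℕ → S → A → ℝ) (H h : ℕ) : S → S → ℝ :=
  Wp f r p q H (H - h)

/-- Pairwise state-action value function `Q_h^{p,q}`. -/
noncomputable def Qp {S A : Type*} [Fintype S] [Fintype A]
    (f : S → A → S → ℝ) (r : S → A → S → A → ℝ)
    (p q : ℕ → S → A → ℝ) (H h : ℕ) (s : S) (a : A) (s' : S) (a' : A) : ℝ :=
  r s a s' a' + ∑ t, ∑ t', f s a t * f s' a' t' * Vp f r p q H (h + 1) t t'

section helpers
variable {S A : Type*} [Fintype S] [Fintype A]

lemma occ_eq (f : S → A → S → ℝ) (ν : S → ℝ) (p : ℕ → S → A → ℝ)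
    (hp1 : ∀ h s, ∑ a, p h s a = 1) (h : ℕ) (s : S) (a : A) :
    occ f ν p h s a = (∑ b, occ f ν p h s b) * p h s a := by
  cases h with
  | zero => simp [occ, ← Finset.mul_sum, hp1]
  | succ n => simp [occ, ← Finset.mul_sum, hp1]

lemma m_succ (f : S → A → S → ℝ) (ν : S → ℝ) (p : ℕ → S → A → ℝ)
    (hp1 : ∀ h s, ∑ a, p h s a = 1) (h : ℕ) (t : S) :
    (∑ a, occ f ν p (h + 1) t a) = ∑ s, ∑ a, occ f ν p h s a * f s a t := by
  simp [occ, ← Finset.mul_sum, hp1]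

lemma m_zero (f : S → A → S → ℝ) (ν : S → ℝ) (p : ℕ → S → A → ℝ)
    (hp1 : ∀ h s, ∑ a, p h s a = 1) (s : S) :
    (∑ a, occ f ν p 0 s a) = ν s := by
  simp [occ, ← Finset.mul_sum, hp1]

lemma Vp_step (f : S → A → S → ℝ) (r : S → A → S → A → ℝ)
    (p q : ℕ → S → A → ℝ) (H h : ℕ) (hh : h < H) (s s' : S) :
    Vp f r p q H h s s' = ∑ a, ∑ a', p h s a * q h s' a' * Qp f r p q H h s a s' a' := by
  unfold Vp Qp
  have h1 : H - h = (H - (h + 1)) + 1 := by omega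
  rw [h1, Wp]
  have h2 : H - (H - (h + 1) + 1) = h := by omega
  rw [h2]
  simp [Vp]

lemma Vp_top (f : S → A → S → ℝ) (r : S → A → S → A → ℝ)
    (p q : ℕ → S → A → ℝ) (H : ℕ) (s s' : S) :
    Vp f r p q H H s s' = 0 := by
  simp [Vp, Wp]

end helpers

section more
variable {S A : Type*} [Fintype S] [Fintype A]

lemma sum_comm6 (M : S → A → S → A → S → S → ℝ) :
    ∑ t : S, ∑ t' : S, ∑ s : S, ∑ a : A, ∑ s' : S, ∑ a' : A, M s a s' a' t t'
      = ∑ s : S, ∑ s' : S, ∑ a : A, ∑ a' : A, ∑ t : S, ∑ t' : S, M s a s' a' t t' := by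
  have key : ∀ (G : S × S → S × A → S × A → ℝ),
      ∑ w : S × S, ∑ u : S × A, ∑ v : S × A, G w u v
        = ∑ u : S × A, ∑ v : S × A, ∑ w : S × S, G w u v := by
    intro G
    rw [Finset.sum_comm]
    exact Finset.sum_congr rfl fun u _ => Finset.sum_comm
  have h1 := key fun w u v => M u.1 u.2 v.1 v.2 w.1 w.2
  simp only [Fintype.sum_prod_type] at h1
  rw [h1]
  exact Finset.sum_congr rfl fun s _ => Finset.sum_comm

lemma telescope (H : ℕ) (g T : ℕ → ℝ) (h0 : g H = 0)
    (hstep : ∀ h < H, g h = T h + g (h + 1)) :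
    g 0 = ∑ h ∈ Finset.range H, T h := by
  suffices hs : ∀ n ≤ H, g (H - n) = ∑ h ∈ Finset.Ico (H - n) H, T h by
    have h0' := hs H le_rfl
    rw [Nat.sub_self] at h0'
    rw [h0', Finset.range_eq_Ico]
  intro n hn
  induction n with
  | zero => simpa using h0
  | succ n ih =>
    have hn' : n ≤ H := Nat.le_of_succ_le hn
    have h1 : H - (n + 1) < H := by omega
    have h2 : H - (n + 1) + 1 = H - n := by omega
    rw [hstep _ h1, h2, ih hn', Finset.sum_eq_sum_Ico_succ_bot h1, h2]

set_option maxRecDepth 10000 in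
lemma hdec_lemma (f : S → A → S → ℝ) (r : S → A → S → A → ℝ) (H : ℕ)
    (p p' pbar : ℕ → S → A → ℝ) (h : ℕ) (hh : h < H) (s s' : S) :
    Vp f r p pbar H h s s' - Vp f r p' pbar H h s s'
      = (∑ a, ∑ a', (p h s a - p' h s a) * pbar h s' a' * Qp f r p' pbar H h s a s' a')
        + ∑ a, ∑ a', p h s a * pbar h s' a' * ∑ t, ∑ t',
            f s a t * f s' a' t' *
              (Vp f r p pbar H (h + 1) t t' - Vp f r p' pbar H (h + 1) t t') := by
  rw [Vp_step f r p pbar H h hh, Vp_step f r p' pbar H h hh,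
    ← Finset.sum_sub_distrib, ← Finset.sum_add_distrib]
  refine Finset.sum_congr rfl fun a _ => ?_
  rw [← Finset.sum_sub_distrib, ← Finset.sum_add_distrib]
  refine Finset.sum_congr rfl fun a' _ => ?_
  simp only [Qp, mul_sub, Finset.sum_sub_distrib]
  ring

lemma E1' (mp mq : S → ℝ) (K : S → A → S → A → ℝ) (u v w : S → A → ℝ) :
    ∑ s, ∑ s', mp s * mq s' *
        (∑ a, ∑ a', (u s a - v s a) * w s' a' * K s a s' a')
      = ∑ s, mp s * ∑ a, (∑ s', ∑ a', (mq s' * w s' a') * K s a s' a') * (u s a - v s a) := by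
  simp only [Finset.sum_mul, Finset.mul_sum]
  refine Finset.sum_congr rfl fun s _ => ?_
  rw [Finset.sum_comm]
  exact Finset.sum_congr rfl fun a _ => Finset.sum_congr rfl fun s' _ =>
    Finset.sum_congr rfl fun a' _ => by ring

lemma E2' (mp mq : S → ℝ) (u w : S → A → ℝ) (D : S → S → ℝ) (f : S → A → S → ℝ) :
    ∑ s, ∑ s', mp s * mq s' *
        (∑ a, ∑ a', u s a * w s' a' * ∑ t, ∑ t', f s a t * f s' a' t' * D t t')
      = ∑ t, ∑ t', (∑ s, ∑ a, (mp s * u s a) * f s a t) *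
          (∑ s', ∑ a', (mq s' * w s' a') * f s' a' t') * D t t' := by
  simp only [Finset.sum_mul, Finset.mul_sum]
  rw [sum_comm6, Finset.sum_comm]
  refine Finset.sum_congr rfl fun x _ => Finset.sum_congr rfl fun y _ => ?_
  rw [Finset.sum_comm]
  exact Finset.sum_congr rfl fun _ _ => Finset.sum_congr rfl fun _ _ =>
    Finset.sum_congr rfl fun _ _ => Finset.sum_congr rfl fun _ _ => by ring

lemma step_lemma (f : S → A → S → ℝ) (r : S → A → S → A → ℝ) (H : ℕ) (ν : S → ℝ)
    (p p' pbar : ℕ → S → A → ℝ)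
    (hp1 : ∀ h s, ∑ a, p h s a = 1)
    (hpbar1 : ∀ h s, ∑ a, pbar h s a = 1)
    (h : ℕ) (hh : h < H) :
    ∑ s, ∑ s', (∑ a, occ f ν p h s a) * (∑ a', occ f ν pbar h s' a') *
        (Vp f r p pbar H h s s' - Vp f r p' pbar H h s s')
      = (∑ s, (∑ a0, occ f ν p h s a0) *
          ∑ a, (∑ s', ∑ a', occ f ν pbar h s' a' * Qp f r p' pbar H h s a s' a') *
            (p h s a - p' h s a))
        + ∑ t, ∑ t', (∑ a, occ f ν p (h + 1) t a) * (∑ a', occ f ν pbar (h + 1) t' a') *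
            (Vp f r p pbar H (h + 1) t t' - Vp f r p' pbar H (h + 1) t t') := by
  have hT : ∀ s a, (∑ s', ∑ a', occ f ν pbar h s' a' * Qp f r p' pbar H h s a s' a')
      = ∑ s', ∑ a', ((∑ b, occ f ν pbar h s' b) * pbar h s' a') *
          Qp f r p' pbar H h s a s' a' := by
    intro s a
    exact Finset.sum_congr rfl fun s' _ => Finset.sum_congr rfl fun a' _ => by
      rw [occ_eq f ν pbar hpbar1]
  have E1 : ∑ s, ∑ s', (∑ a, occ f ν p h s a) * (∑ a', occ f ν pbar h s' a') *
        (∑ a, ∑ a', (p h s a - p' h s a) * pbar h s' a' * Qp f r p' pbar H h s a s' a')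
      = ∑ s, (∑ a0, occ f ν p h s a0) *
          ∑ a, (∑ s', ∑ a', occ f ν pbar h s' a' * Qp f r p' pbar H h s a s' a') *
            (p h s a - p' h s a) := by
    simp only [hT]
    exact E1' (fun s => ∑ a, occ f ν p h s a) (fun s' => ∑ a', occ f ν pbar h s' a')
      (fun s a s' a' => Qp f r p' pbar H h s a s' a') (fun s a => p h s a)
      (fun s a => p' h s a) (fun s' a' => pbar h s' a')
  have hocc : ∀ t, (∑ a, occ f ν p (h + 1) t a)
      = ∑ s, ∑ a, ((∑ b, occ f ν p h s b) * p h s a) * f s a t := by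
    intro t
    rw [m_succ f ν p hp1]
    exact Finset.sum_congr rfl fun s _ => Finset.sum_congr rfl fun a _ => by
      rw [occ_eq f ν p hp1]
  have hoccbar : ∀ t, (∑ a, occ f ν pbar (h + 1) t a)
      = ∑ s, ∑ a, ((∑ b, occ f ν pbar h s b) * pbar h s a) * f s a t := by
    intro t
    rw [m_succ f ν pbar hpbar1]
    exact Finset.sum_congr rfl fun s _ => Finset.sum_congr rfl fun a _ => by
      rw [occ_eq f ν pbar hpbar1]
  have E2 : ∑ s, ∑ s', (∑ a, occ f ν p h s a) * (∑ a', occ f ν pbar h s' a') *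
        (∑ a, ∑ a', p h s a * pbar h s' a' * ∑ t, ∑ t',
          f s a t * f s' a' t' *
            (Vp f r p pbar H (h + 1) t t' - Vp f r p' pbar H (h + 1) t t'))
      = ∑ t, ∑ t', (∑ a, occ f ν p (h + 1) t a) * (∑ a', occ f ν pbar (h + 1) t' a') *
          (Vp f r p pbar H (h + 1) t t' - Vp f r p' pbar H (h + 1) t t') := by
    simp only [hocc, hoccbar]
    exact E2' (fun s => ∑ a, occ f ν p h s a) (fun s' => ∑ a', occ f ν pbar h s' a')
      (fun s a => p h s a) (fun s' a' => pbar h s' a')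
      (fun t t' => Vp f r p pbar H (h + 1) t t' - Vp f r p' pbar H (h + 1) t t') f
  calc ∑ s, ∑ s', (∑ a, occ f ν p h s a) * (∑ a', occ f ν pbar h s' a') *
        (Vp f r p pbar H h s s' - Vp f r p' pbar H h s s')
      = ∑ s, ∑ s', ((∑ a, occ f ν p h s a) * (∑ a', occ f ν pbar h s' a') *
          (∑ a, ∑ a', (p h s a - p' h s a) * pbar h s' a' * Qp f r p' pbar H h s a s' a')
        + (∑ a, occ f ν p h s a) * (∑ a', occ f ν pbar h s' a') *
          (∑ a, ∑ a', p h s a * pbar h s' a' * ∑ t, ∑ t',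
            f s a t * f s' a' t' *
              (Vp f r p pbar H (h + 1) t t' - Vp f r p' pbar H (h + 1) t t'))) := by
        refine Finset.sum_congr rfl fun s _ => Finset.sum_congr rfl fun s' _ => ?_
        rw [hdec_lemma f r H p p' pbar h hh, mul_add]
    _ = _ := by
        simp only [Finset.sum_add_distrib]
        rw [E1, E2]

end more

section final
variable {S A : Type*} [Fintype S] [Fintype A]

lemma value_diff (f : S → A → S → ℝ) (r : S → A → S → A → ℝ) (H : ℕ) (ν : S → ℝ)
    (p p' pbar : ℕ → S → A → ℝ)
    (hp1 : ∀ h s, ∑ a, p h s a = 1)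
    (hpbar1 : ∀ h s, ∑ a, pbar h s a = 1) :
    ∑ s, ∑ s', ν s * ν s' * (Vp f r p pbar H 0 s s' - Vp f r p' pbar H 0 s s')
      = ∑ h ∈ Finset.range H, ∑ s, (∑ a0, occ f ν p h s a0) *
          ∑ a, (∑ s', ∑ a', occ f ν pbar h s' a' * Qp f r p' pbar H h s a s' a') *
            (p h s a - p' h s a) := by
  have ht := telescope H
    (fun h => ∑ s, ∑ s', (∑ a, occ f ν p h s a) * (∑ a', occ f ν pbar h s' a') *
      (Vp f r p pbar H h s s' - Vp f r p' pbar H h s s'))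
    (fun h => ∑ s, (∑ a0, occ f ν p h s a0) *
      ∑ a, (∑ s', ∑ a', occ f ν pbar h s' a' * Qp f r p' pbar H h s a s' a') *
        (p h s a - p' h s a))
    (by simp [Vp_top]) (fun h hh => step_lemma f r H ν p p' pbar hp1 hpbar1 h hh)
  rw [← ht]
  exact Finset.sum_congr rfl fun s _ => Finset.sum_congr rfl fun s' _ => by
    rw [m_zero f ν p hp1, m_zero f ν pbar hpbar1]

end final

theorem stmt13 {S A : Type*} [Fintype S] [Fintype A] [DecidableEq S]
    (f : S → A → S → ℝ) (hf0 : ∀ s a s', 0 ≤ f s a s')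
    (hf1 : ∀ s a, ∑ s', f s a s' = 1)
    (r : S → A → S → A → ℝ) (H : ℕ)
    (ν : S → ℝ) (hν0 : ∀ s, 0 ≤ ν s) (hν1 : ∑ s, ν s = 1)
    (p p' pbar : ℕ → S → A → ℝ)
    (hp0 : ∀ h s a, 0 ≤ p h s a) (hp1 : ∀ h s, ∑ a, p h s a = 1)
    (hp'0 : ∀ h s a, 0 ≤ p' h s a) (hp'1 : ∀ h s, ∑ a, p' h s a = 1)
    (hpbar0 : ∀ h s a, 0 ≤ pbar h s a) (hpbar1 : ∀ h s, ∑ a, pbar h s a = 1) :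
    ∑ s1, ν s1 * (Vp f r p pbar H 0 s1 s1 - Vp f r p' pbar H 0 s1 s1) =
      ∑ s1, ν s1 * ∑ h ∈ Finset.range H, ∑ s,
        (∑ a0, occ f (fun t => if t = s1 then 1 else 0) p h s a0) *
          ∑ a, (∑ s', ∑ a', occ f (fun t => if t = s1 then 1 else 0) pbar h s' a' *
              Qp f r p' pbar H h s a s' a') * (p h s a - p' h s a) := by
  refine Finset.sum_congr rfl fun s1 _ => ?_
  congr 1
  have h := value_diff f r H (fun t => if t = s1 then 1 else 0) p p' pbar hp1 hpbar1
  rw [← h]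
  simp [ite_mul, Finset.sum_ite_eq']
end
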